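/- Let n ≥ 3, m ≥ 2, ε ∈ (0, 4/(n−2)), and let u be a radial Neumann solution with exactly m−1 interior zeros, with zeros 1 > ρ_1 > … > ρ_{m−1} > 0 and critical points δ_1 = 1 > δ_2 > … > δ_m = 0. Define w(r) := ρ_1^{2(n−2)/(4−ε(n−2))} · u(ρ_1 r) for r ∈ [0,1]. Then w is a radial Dirichlet solution of the same equation with exactly m−2 interior zeros; its zeros in (0,1] are ρ_k/ρ_1 for k = 1,…,m−1 (with ρ_1/ρ_1 = 1) and its critical points in [0,1] are δ_{k+1}/ρ_1 for k = 1,…,m−1. -/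

import Mathlib

open Real Set Filter Topology MeasureTheory

noncomputable section

/-- `κ_n = ((n-2)/4) · Γ(n/2)² / Γ(n)`. -/
def kappa (n : ℕ) : ℝ :=
  (((n : ℝ) - 2) / 4) * Real.Gamma ((n : ℝ) / 2) ^ 2 / Real.Gamma (n : ℝ)

/-- `p_ε = (n+2)/(n-2) - ε`. -/
def pEps (n : ℕ) (ε : ℝ) : ℝ := ((n : ℝ) + 2) / ((n : ℝ) - 2) - ε

/-- `u ∈ C²([0,1])` is a radial solution of `-Δu = |u|^{p-1} u` on the unit ball of `ℝⁿ`,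
written in the radial variable: `(r^{n-1} u')' = -|u|^{p-1} u · r^{n-1}` on `(0,1]`,
with `u'(0) = 0`. -/
def IsRadialSolution (n : ℕ) (p : ℝ) (u : ℝ → ℝ) : Prop :=
  ContDiffOn ℝ 2 u (Set.Icc 0 1) ∧ deriv u 0 = 0 ∧
    ∀ r ∈ Set.Ioc (0 : ℝ) 1,
      deriv (fun s => s ^ (n - 1) * deriv u s) r = -(|u r| ^ (p - 1) * u r * r ^ (n - 1))

/-- Radial Dirichlet solution with exactly `m-1` interior zeros, together with the
decreasing enumeration of its zeros `ρ 1 = 1 > ρ 2 > … > ρ m > 0` in `(0,1]` and of its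
critical points `1 > δ 1 > … > δ m = 0` in `[0,1]`, interlaced as
`0 = δ m < ρ m < δ (m-1) < … < δ 1 < ρ 1 = 1`. -/
def DirichletData (n : ℕ) (p : ℝ) (m : ℕ) (u : ℝ → ℝ) (ρ δ : ℕ → ℝ) : Prop :=
  IsRadialSolution n p u ∧ u 1 = 0 ∧ ρ 1 = 1 ∧ δ m = 0 ∧
    (∀ k, 1 ≤ k → k ≤ m → δ k < ρ k) ∧
    (∀ k, 1 ≤ k → k + 1 ≤ m → ρ (k + 1) < δ k) ∧
    {r : ℝ | r ∈ Set.Ioc (0 : ℝ) 1 ∧ u r = 0} = ρ '' Set.Icc 1 m ∧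
    {r : ℝ | r ∈ Set.Icc (0 : ℝ) 1 ∧ deriv u r = 0} = δ '' Set.Icc 1 m

/-- Radial Neumann solution with exactly `m-1` interior zeros, together with the
decreasing enumeration of its zeros `1 > ρ 1 > … > ρ (m-1) > 0` in `(0,1)` and of its
critical points `δ 1 = 1 > δ 2 > … > δ m = 0` in `[0,1]`, interlaced as
`0 = δ m < ρ (m-1) < δ (m-1) < … < ρ 1 < δ 1 = 1`. -/
def NeumannData (n : ℕ) (p : ℝ) (m : ℕ) (u : ℝ → ℝ) (ρ δ : ℕ → ℝ) : Prop :=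
  IsRadialSolution n p u ∧ deriv u 1 = 0 ∧ δ 1 = 1 ∧ δ m = 0 ∧
    (∀ k, 1 ≤ k → k ≤ m - 1 → ρ k < δ k) ∧
    (∀ k, 1 ≤ k → k ≤ m - 1 → δ (k + 1) < ρ k) ∧
    {r : ℝ | r ∈ Set.Ioo (0 : ℝ) 1 ∧ u r = 0} = ρ '' Set.Icc 1 (m - 1) ∧
    {r : ℝ | r ∈ Set.Icc (0 : ℝ) 1 ∧ deriv u r = 0} = δ '' Set.Icc 1 m

/-- A nontrivial radial Dirichlet solution with exactly `m-1` interior zeros. -/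
def DirichletSol (n : ℕ) (p : ℝ) (m : ℕ) (u : ℝ → ℝ) : Prop :=
  IsRadialSolution n p u ∧ u 1 = 0 ∧ (∃ r ∈ Set.Icc (0 : ℝ) 1, u r ≠ 0) ∧
    ∃ Z : Finset ℝ, (Z : Set ℝ) = {r | r ∈ Set.Ioo (0 : ℝ) 1 ∧ u r = 0} ∧ Z.card = m - 1

/-- A nontrivial radial Neumann solution with exactly `m-1` interior zeros. -/
def NeumannSol (n : ℕ) (p : ℝ) (m : ℕ) (u : ℝ → ℝ) : Prop :=
  IsRadialSolution n p u ∧ deriv u 1 = 0 ∧ (∃ r ∈ Set.Icc (0 : ℝ) 1, u r ≠ 0) ∧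
    ∃ Z : Finset ℝ, (Z : Set ℝ) = {r | r ∈ Set.Ioo (0 : ℝ) 1 ∧ u r = 0} ∧ Z.card = m - 1

/-!
The radial equation `(r^{n-1} u')' = -|u|^{p-1} u r^{n-1}` is invariant under the rescaling
`u ↦ a^{2/(p-1)} u(a ·)`: the factor `a^2` produced by differentiating twice is absorbed by the
nonlinearity since `(a^{2/(p-1)})^{p-1} = a^2`. For `p = p_ε` the exponent `2/(p-1)` is
`2(n-2)/(4-ε(n-2))`. Taking `a = ρ₁`, the first interior zero of the Neumann solution, turns it into
a Dirichlet solution on the unit ball; its zeros and critical points are those of `u` in `[0, ρ₁]`,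
divided by `ρ₁`, and by the interlacing these are `ρ₁, …, ρ_{m-1}` and `δ₂, …, δ_m`.
-/

theorem deriv_const_mul_comp_const_mul (u : ℝ → ℝ) (a c x : ℝ) :
    deriv (fun r => c * u (a * r)) x = c * (a * deriv u (a * x)) := by
  rw [deriv_const_mul_field, deriv_comp_mul_left (f := u), smul_eq_mul]

theorem IsRadialSolution.comp_const_mul {n : ℕ} {p a c : ℝ} {u : ℝ → ℝ}
    (hu : IsRadialSolution n p u) (ha : 0 < a) (ha1 : a ≤ 1) (hc : 0 ≤ c)
    (hcp : c ^ (p - 1) = a ^ 2) :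
    IsRadialSolution n p (fun r => c * u (a * r)) := by
  obtain ⟨hsmooth, hu0, hode⟩ := hu
  refine ⟨?_, ?_, fun r hr => ?_⟩
  · refine contDiffOn_const.mul (hsmooth.comp (contDiff_const.mul contDiff_id).contDiffOn ?_)
    exact fun r hr => ⟨mul_nonneg ha.le hr.1, mul_le_one₀ ha1 hr.1 hr.2⟩
  · simp [deriv_const_mul_comp_const_mul, hu0]
  · have hflux : (fun s => s ^ (n - 1) * deriv (fun r => c * u (a * r)) s)
        = fun s => c * a / a ^ (n - 1) * ((fun t => t ^ (n - 1) * deriv u t) (a * s)) := by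
      funext s
      rw [deriv_const_mul_comp_const_mul]
      field_simp
      ring
    have har : a * r ∈ Ioc 0 1 := ⟨mul_pos ha hr.1, mul_le_one₀ ha1 hr.1.le hr.2⟩
    rw [hflux, deriv_const_mul_field, deriv_comp_mul_left (f := fun t => t ^ (n - 1) * deriv u t),
      smul_eq_mul, hode _ har, abs_mul, abs_of_nonneg hc, mul_rpow hc (abs_nonneg _), hcp]
    field_simp
    ring

theorem pEps_sub_one {n : ℕ} (ε : ℝ) (hn : (n : ℝ) - 2 ≠ 0) :
    pEps n ε - 1 = 4 / ((n : ℝ) - 2) - ε := by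
  unfold pEps
  field_simp
  ring

theorem two_div_pEps_sub_one {n : ℕ} (ε : ℝ) (hn : (n : ℝ) - 2 ≠ 0) :
    2 / (pEps n ε - 1) = 2 * ((n : ℝ) - 2) / (4 - ε * ((n : ℝ) - 2)) := by
  rw [pEps_sub_one ε hn, div_sub' hn, div_div_eq_mul_div, mul_comm (_ - 2) ε]

theorem image_div_const_eq_preimage_const_mul {G₀ : Type*} [CommGroupWithZero G₀] {a : G₀}
    (ha : a ≠ 0) (s : Set G₀) : (· / a) '' s = (a * ·) ⁻¹' s :=
  congrFun (image_eq_preimage_of_inverse (fun x => mul_div_cancel₀ x ha)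
    (fun x => mul_div_cancel_left₀ x ha)) s

theorem setOf_mem_Icc_comp_const_mul {a : ℝ} (ha : 0 < a) (P : ℝ → Prop) :
    {r | r ∈ Icc 0 1 ∧ P (a * r)} = (· / a) '' {x | x ∈ Icc 0 a ∧ P x} := by
  rw [image_div_const_eq_preimage_const_mul ha.ne']
  ext r
  simp only [mem_ofPred_eq, mem_preimage, mem_Icc]
  rw [mul_nonneg_iff_of_pos_left ha, mul_le_iff_le_one_right ha]

theorem setOf_mem_Ioc_comp_const_mul {a : ℝ} (ha : 0 < a) (P : ℝ → Prop) :
    {r | r ∈ Ioc 0 1 ∧ P (a * r)} = (· / a) '' {x | x ∈ Ioc 0 a ∧ P x} := by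
  rw [image_div_const_eq_preimage_const_mul ha.ne']
  ext r
  simp only [mem_ofPred_eq, mem_preimage, mem_Ioc]
  rw [mul_pos_iff_of_pos_left ha, mul_le_iff_le_one_right ha]

namespace NeumannData

variable {n : ℕ} {p : ℝ} {m : ℕ} {u : ℝ → ℝ} {ρ δ : ℕ → ℝ}

theorem zero_mem (h : NeumannData n p m u ρ δ) {k : ℕ} (hk1 : 1 ≤ k) (hk : k ≤ m - 1) :
    ρ k ∈ Ioo 0 1 ∧ u (ρ k) = 0 := by
  obtain ⟨-, -, -, -, -, -, hzeros, -⟩ := h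
  have hρk : ρ k ∈ ρ '' Icc 1 (m - 1) := mem_image_of_mem ρ ⟨hk1, hk⟩
  rwa [← hzeros] at hρk

theorem critPoint_mem (h : NeumannData n p m u ρ δ) {k : ℕ} (hk1 : 1 ≤ k) (hk : k ≤ m) :
    δ k ∈ Icc 0 1 ∧ deriv u (δ k) = 0 := by
  obtain ⟨-, -, -, -, -, -, -, hcrit⟩ := h
  have hδk : δ k ∈ δ '' Icc 1 m := mem_image_of_mem δ ⟨hk1, hk⟩
  rwa [← hcrit] at hδk

theorem critPoint_lt_firstZero (h : NeumannData n p m u ρ δ) {j : ℕ} (hj : 2 ≤ j)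
    (hjm : j ≤ m) : δ j < ρ 1 := by
  obtain ⟨-, -, -, -, hρδ, hδρ, -⟩ := h
  induction j, hj using Nat.le_induction with
  | base => exact hδρ 1 le_rfl (by omega)
  | succ j hj ih =>
    calc δ (j + 1) < ρ j := hδρ j (by omega) (by omega)
      _ < δ j := hρδ j (by omega) (by omega)
      _ < ρ 1 := ih (by omega)

theorem zero_le_firstZero (h : NeumannData n p m u ρ δ) {k : ℕ} (hk1 : 1 ≤ k)
    (hk : k ≤ m - 1) : ρ k ≤ ρ 1 := by
  rcases hk1.eq_or_lt with rfl | hk1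
  · rfl
  · have ⟨_, _, _, _, hρδ, _⟩ := h
    exact ((hρδ k hk1.le hk).trans (h.critPoint_lt_firstZero hk1 (by omega))).le

theorem firstZero_lt_one (h : NeumannData n p m u ρ δ) (hm : 2 ≤ m) : ρ 1 < 1 :=
  (h.zero_mem le_rfl (by omega)).1.2

theorem setOf_zero_Ioc_firstZero (h : NeumannData n p m u ρ δ) (hm : 2 ≤ m) :
    {x | x ∈ Ioc 0 (ρ 1) ∧ u x = 0} = ρ '' Icc 1 (m - 1) := by
  have ⟨_, _, _, _, _, _, hzeros, _⟩ := h
  ext x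
  constructor
  · rintro ⟨⟨hx0, hx⟩, hux⟩
    rw [← hzeros]
    exact ⟨⟨hx0, hx.trans_lt (h.firstZero_lt_one hm)⟩, hux⟩
  · rintro ⟨k, ⟨hk1, hk⟩, rfl⟩
    obtain ⟨⟨hρk, -⟩, huρk⟩ := h.zero_mem hk1 hk
    exact ⟨⟨hρk, h.zero_le_firstZero hk1 hk⟩, huρk⟩

theorem setOf_critPoint_Icc_firstZero (h : NeumannData n p m u ρ δ) (hm : 2 ≤ m) :
    {x | x ∈ Icc 0 (ρ 1) ∧ deriv u x = 0} = (fun k => δ (k + 1)) '' Icc 1 (m - 1) := by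
  have ⟨_, _, hδ1, _, _, _, _, hcrit⟩ := h
  ext x
  constructor
  · rintro ⟨⟨hx0, hx⟩, hu'x⟩
    have hρ1 := h.firstZero_lt_one hm
    obtain ⟨j, ⟨hj1, hj⟩, rfl⟩ : x ∈ δ '' Icc 1 m := by
      rw [← hcrit]
      exact ⟨⟨hx0, hx.trans hρ1.le⟩, hu'x⟩
    have hj2 : j ≠ 1 := by
      rintro rfl
      linarith
    exact ⟨j - 1, ⟨by omega, by omega⟩, by simp only [Nat.sub_add_cancel hj1]⟩
  · rintro ⟨k, ⟨hk1, hk⟩, rfl⟩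
    obtain ⟨⟨hδk, -⟩, hu'δk⟩ := h.critPoint_mem (k := k + 1) (by omega) (by omega)
    exact ⟨⟨hδk, (h.critPoint_lt_firstZero (by omega) (by omega)).le⟩, hu'δk⟩

end NeumannData

theorem neumann_to_dirichlet_rescaling_general (n m : ℕ) (hm : 2 ≤ m) (ε : ℝ)
    (hε : ε ∈ Set.Ioo (0 : ℝ) (4 / ((n : ℝ) - 2)))
    (u : ℝ → ℝ) (ρ δ : ℕ → ℝ)
    (h : NeumannData n (pEps n ε) m u ρ δ) :
    DirichletData n (pEps n ε) (m - 1)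
      (fun r : ℝ => ρ 1 ^ (2 * ((n : ℝ) - 2) / (4 - ε * ((n : ℝ) - 2))) * u (ρ 1 * r))
      (fun k : ℕ => ρ k / ρ 1) (fun k : ℕ => δ (k + 1) / ρ 1) := by
  have hn : 0 < (n : ℝ) - 2 := (div_pos_iff_of_pos_left four_pos).mp (hε.1.trans hε.2)
  have hp : 0 < pEps n ε - 1 := by rw [pEps_sub_one ε hn.ne']; linarith [hε.2]
  have ⟨hu, _, _, hδm, hρδ, hδρ, _⟩ := h
  obtain ⟨⟨hρ1, -⟩, huρ1⟩ := h.zero_mem le_rfl (by omega)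
  rw [← two_div_pEps_sub_one ε hn.ne']
  set c := ρ 1 ^ (2 / (pEps n ε - 1))
  have hc : 0 < c := rpow_pos_of_pos hρ1 _
  have hcp : c ^ (pEps n ε - 1) = ρ 1 ^ 2 := by
    rw [← rpow_mul hρ1.le, div_mul_cancel₀ _ hp.ne', rpow_two]
  refine ⟨hu.comp_const_mul hρ1 (h.firstZero_lt_one hm).le hc.le hcp, by simp [huρ1],
    div_self hρ1.ne', ?_, fun k hk1 hk => ?_, fun k hk1 hk => ?_, ?_, ?_⟩
  · simp only [Nat.sub_add_cancel (by omega : 1 ≤ m), hδm, zero_div]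
  · exact div_lt_div_of_pos_right (hδρ k hk1 hk) hρ1
  · exact div_lt_div_of_pos_right (hρδ (k + 1) (by omega) (by omega)) hρ1
  · simp only [mul_eq_zero, hc.ne', false_or]
    rw [setOf_mem_Ioc_comp_const_mul hρ1 (u · = 0), h.setOf_zero_Ioc_firstZero hm,
      image_image]
  · simp only [deriv_const_mul_comp_const_mul, mul_eq_zero, hc.ne', hρ1.ne', false_or]
    rw [setOf_mem_Icc_comp_const_mul hρ1 (deriv u · = 0), h.setOf_critPoint_Icc_firstZero hm,
      image_image]

/-- **Lemma (rescaling, Neumann → Dirichlet).** If `u` is a radial Neumann solution with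
exactly `m-1` interior zeros (zeros `ρ`, critical points `δ`), then
`w(r) = ρ 1 ^ (2(n-2)/(4-ε(n-2))) · u(ρ 1 · r)` is a radial Dirichlet solution of the
same equation with exactly `m-2` interior zeros, whose zeros are `ρ k / ρ 1`
(`k = 1,…,m-1`) and whose critical points are `δ (k+1) / ρ 1` (`k = 1,…,m-1`). -/
theorem neumann_to_dirichlet_rescaling (n m : ℕ) (hn : 3 ≤ n) (hm : 2 ≤ m) (ε : ℝ)
    (hε : ε ∈ Set.Ioo (0 : ℝ) (4 / ((n : ℝ) - 2)))
    (u : ℝ → ℝ) (ρ δ : ℕ → ℝ)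
    (h : NeumannData n (pEps n ε) m u ρ δ) :
    DirichletData n (pEps n ε) (m - 1)
      (fun r : ℝ => ρ 1 ^ (2 * ((n : ℝ) - 2) / (4 - ε * ((n : ℝ) - 2))) * u (ρ 1 * r))
      (fun k : ℕ => ρ k / ρ 1) (fun k : ℕ => δ (k + 1) / ρ 1) :=
  neumann_to_dirichlet_rescaling_general n m hm ε hε u ρ δ h
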